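/- In a concatenation M * N of multisegments M ∈ R_p and N ∈ R_q, the segments of M * N containing both p and p+1 are linearly ordered by inclusion. -/

import Mathlib

/-- A segment is an interval `[i,j]` of positive integers, encoded as the
pair `(i, j)` with `1 ≤ i ≤ j`.  A multisegment is a multiset of segments. -/
abbrev Seg := ℕ × ℕ

/-- The weight of the multisegment `M` at `k`: the number of segments of `M`
containing `k`. -/
def wt (M : Multiset Seg) (k : ℕ) : ℕ :=
  (M.filter (fun s => s.1 ≤ k ∧ k ≤ s.2)).card

/-- `M` belongs to `R_n`: all its members are segments contained in `[1,n]`,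
and its weight is `(n+1, …, n+1)`. -/
def InR (n : ℕ) (M : Multiset Seg) : Prop :=
  (∀ s ∈ M, 1 ≤ s.1 ∧ s.1 ≤ s.2 ∧ s.2 ≤ n) ∧
  ∀ k, 1 ≤ k → k ≤ n → wt M k = n + 1

/-- Concatenation of multisegments `M ∈ R_p` and `N ∈ R_q`: keep the segments
of `M` ending before `p` and those of `N` (shifted by `p`) starting after `1`,
and glue the segments of `M` ending at `p` (padded with `q` copies of `[1,p]`)
to the segments of `N` starting at `1` (padded with `p` copies of `[1,q]`),
matching shortest with shortest. -/
def concatMS (p q : ℕ) (M N : Multiset Seg) : Multiset Seg :=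
  if p = 0 then N
  else if q = 0 then M
  else
    M.filter (fun s => s.2 < p)
      + (N.filter (fun s => 1 < s.1)).map (fun s => (s.1 + p, s.2 + p))
      + ↑(List.map (fun x : ℕ × ℕ => (x.1, x.2 + p))
          (List.zip
            ((((M.filter (fun s : Seg => s.2 = p)).map Prod.fst
                + Multiset.replicate q 1).sort (· ≤ ·)).reverse)
            ((((N.filter (fun s : Seg => s.1 = 1)).map Prod.snd
                + Multiset.replicate p q).sort (· ≤ ·)))))

/-- Suspension of a multisegment `M ∈ R_n`: each segment is pushed inward
(`[i,j] ↦ [i+1,j+1]`, keeping start `1` at `1` and sending end `n` to `n+2`)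
and the four segments `[1,1]`, `[2,n+2]`, `[1,n+1]`, `[n+2,n+2]` are added;
the suspension of the empty multisegment is `{[1,1],[2,2],[1,2]}`. -/
def suspMS (n : ℕ) (M : Multiset Seg) : Multiset Seg :=
  if n = 0 then {(1, 1), (2, 2), (1, 2)}
  else
    M.map (fun s => (if s.1 = 1 then 1 else s.1 + 1, if s.2 = n then n + 2 else s.2 + 1))
      + {(1, 1), (2, n + 2), (1, n + 1), (n + 2, n + 2)}


/-!
The segments of `M * N` containing both `p` and `p + 1` are exactly the glued ones. Gluing pairs
the starts of the segments of `M` ending at `p`, sorted decreasingly, with the ends of the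
segments of `N` starting at `1`, sorted increasingly; so along the list of glued segments the
starts decrease while the ends increase, and any two of them are nested.
-/

namespace List

variable {α β : Type*}

theorem Pairwise.zip {R : α → α → Prop} {S : β → β → Prop} :
    ∀ {l₁ : List α} {l₂ : List β}, l₁.Pairwise R → l₂.Pairwise S →
      (l₁.zip l₂).Pairwise fun x y => R x.1 y.1 ∧ S x.2 y.2
  | [], _, _, _ => by simp
  | _ :: _, [], _, _ => by simp
  | a :: l₁, b :: l₂, h₁, h₂ => by
    rw [pairwise_cons] at h₁ h₂
    refine pairwise_cons.2 ⟨fun x hx => ?_, h₁.2.zip h₂.2⟩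
    have hx' := of_mem_zip (a := x.1) (b := x.2) hx
    exact ⟨h₁.1 _ hx'.1, h₂.1 _ hx'.2⟩

theorem Pairwise.rel_or_rel_of_mem {R : α → α → Prop} {l : List α} (hl : l.Pairwise R)
    (hrefl : ∀ x ∈ l, R x x) {x y : α} (hx : x ∈ l) (hy : y ∈ l) : R x y ∨ R y x :=
  Pairwise.forall_of_forall_of_flip (R := fun a b => R a b ∨ R b a)
    (fun z hz => Or.inl (hrefl z hz)) (hl.imp Or.inl) (hl.imp Or.inr) hx hy

end List

def gluedPairs (p q : ℕ) (M N : Multiset Seg) : List (ℕ × ℕ) :=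
  List.zip
    ((((M.filter (fun s : Seg => s.2 = p)).map Prod.fst
        + Multiset.replicate q 1).sort (· ≤ ·)).reverse)
    ((((N.filter (fun s : Seg => s.1 = 1)).map Prod.snd
        + Multiset.replicate p q).sort (· ≤ ·)))

section concatMS

variable {p q : ℕ} {M N : Multiset Seg}

theorem concatMS_of_ne_zero (hp : p ≠ 0) (hq : q ≠ 0) :
    concatMS p q M N =
      M.filter (fun s => s.2 < p)
        + (N.filter (fun s => 1 < s.1)).map (fun s => (s.1 + p, s.2 + p))
        + ↑((gluedPairs p q M N).map fun x => (x.1, x.2 + p)) := by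
  rw [concatMS, if_neg hp, if_neg hq, gluedPairs]

theorem gluedPairs_pairwise_nested :
    (gluedPairs p q M N).Pairwise fun x y => y.1 ≤ x.1 ∧ x.2 ≤ y.2 := by
  unfold gluedPairs
  exact (List.pairwise_reverse.2 (Multiset.pairwise_sort _ (· ≤ ·))).zip
    (Multiset.pairwise_sort _ (· ≤ ·))

theorem exists_mem_gluedPairs_of_mem_concatMS (hp : p ≠ 0) (hq : q ≠ 0) {C : Seg}
    (hC : C ∈ concatMS p q M N) (hC₁ : C.1 ≤ p) (hC₂ : p + 1 ≤ C.2) :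
    ∃ x ∈ gluedPairs p q M N, C = (x.1, x.2 + p) := by
  rw [concatMS_of_ne_zero hp hq] at hC
  rcases Multiset.mem_add.1 hC with hC | hC
  · rcases Multiset.mem_add.1 hC with hM | hN
    · have := Multiset.of_mem_filter hM
      omega
    · obtain ⟨s, hs, rfl⟩ := Multiset.mem_map.1 hN
      have := Multiset.of_mem_filter hs
      dsimp only at hC₁
      omega
  · obtain ⟨x, hx, rfl⟩ := List.mem_map.1 (Multiset.mem_coe.1 hC)
    exact ⟨x, hx, rfl⟩

end concatMS

theorem concat_middle_segments_chain_general (p q : ℕ) (hp : 1 ≤ p) (hq : 1 ≤ q)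
    (M N : Multiset Seg) :
    ∀ A ∈ concatMS p q M N, ∀ B ∈ concatMS p q M N,
      A.1 ≤ p → p + 1 ≤ A.2 → B.1 ≤ p → p + 1 ≤ B.2 →
      (B.1 ≤ A.1 ∧ A.2 ≤ B.2) ∨ (A.1 ≤ B.1 ∧ B.2 ≤ A.2) := by
  intro A hA B hB hA₁ hA₂ hB₁ hB₂
  obtain ⟨x, hx, rfl⟩ :=
    exists_mem_gluedPairs_of_mem_concatMS (by omega) (by omega) hA hA₁ hA₂
  obtain ⟨y, hy, rfl⟩ :=
    exists_mem_gluedPairs_of_mem_concatMS (by omega) (by omega) hB hB₁ hB₂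
  have hnested := gluedPairs_pairwise_nested.rel_or_rel_of_mem
    (fun _ _ => ⟨le_rfl, le_rfl⟩) hx hy
  omega

/-- in a concatenation `M * N` with `M ∈ R_p`, `N ∈ R_q`, the
segments containing both `p` and `p+1` are linearly ordered by inclusion. -/
theorem concat_middle_segments_chain (p q : ℕ) (hp : 1 ≤ p) (hq : 1 ≤ q)
    (M N : Multiset Seg) (hM : InR p M) (hN : InR q N) :
    ∀ A ∈ concatMS p q M N, ∀ B ∈ concatMS p q M N,
      A.1 ≤ p → p + 1 ≤ A.2 → B.1 ≤ p → p + 1 ≤ B.2 →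
      (B.1 ≤ A.1 ∧ A.2 ≤ B.2) ∨ (A.1 ≤ B.1 ∧ B.2 ≤ A.2) :=
  concat_middle_segments_chain_general p q hp hq M N
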